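/- For all integers n, m ≥ 0, every real number a, and every integer k with 0 ≤ k < min(n, m), the linearization coefficient with a₁ = a and a₂ = 1−a vanishes: β_k^{(n,m)}(a, 1−a) = 0. -/

import Mathlib

/-! Multiplying the identity by `e^{-u} = e^{-au} e^{-(1-a)u}` turns it into an identity of Taylor
series `F_n(au) F_m((1-a)u) = ∑ β_k F_k(u)`, where `F_k(u) = q_k(u) e^{-u}`. Since `q_k` solves
`u q'' = 2(u+k) q' - 2k q`, the series `F_k` solves `u F'' = 2k F' + u F`, whose coefficient
recurrence kills the odd coefficients of `F_k` below `u^{2k+1}`. The coefficient of `u^{2k+1}`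
itself is nonzero: up to the factor `-2(2k+1) F_k(0)` it is the `u^{2k}` coefficient of the
Wronskian of `F_k(u)` and `F_k(-u)`, which is the polynomial `W(q_k(u), q_k(-u)) + 2 q_k(u) q_k(-u)`
of degree `2k` with top coefficient `2(-1)^k` times the square of the leading coefficient of `q_k`.
Now compare the coefficients of `u^{2j+1}`, `j < min(n, m)`: on the left every term contains an odd
coefficient of order at most `2j+1` of `F_n` or `F_m` and vanishes, while on the right the system is
triangular in the `β_k` with nonzero diagonal. -/

open Finset

/-- The Bessel polynomial `q_n(u) = ∑_{k=0}^n (n!(2n−k)! 2^k)/((2n)!(n−k)! k!) u^k`. -/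
noncomputable def besselQ (n : ℕ) (u : ℝ) : ℝ :=
  ∑ k ∈ Finset.range (n + 1),
    ((n.factorial : ℝ) * (2 * n - k).factorial * 2 ^ k) /
      ((2 * n).factorial * (n - k).factorial * k.factorial) * u ^ k

open scoped Polynomial PowerSeries

namespace PowerSeries

section CommSemiring

variable {R : Type*} [CommSemiring R]

theorem coeff_X_mul_derivative (f : R⟦X⟧) (n : ℕ) :
    coeff n (X * d⁄dX R f) = n * coeff n f := by
  cases n with
  | zero => simp
  | succ n => rw [coeff_succ_X_mul, coeff_derivative, mul_comm, Nat.cast_succ]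

theorem derivative_rescale (a : R) (f : R⟦X⟧) :
    d⁄dX R (rescale a f) = C a * rescale a (d⁄dX R f) := by
  ext n
  rw [coeff_derivative, coeff_C_mul, coeff_rescale, coeff_rescale, coeff_derivative, pow_succ]
  ring

theorem coeff_odd_mul_of_coeff_odd_eq_zero {f g : R⟦X⟧} {k : ℕ}
    (hf : ∀ t < k, coeff (2 * t + 1) f = 0) (hg : ∀ t < k, coeff (2 * t + 1) g = 0) :
    coeff (2 * k + 1) (f * g) =
      coeff 0 f * coeff (2 * k + 1) g + coeff (2 * k + 1) f * coeff 0 g := by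
  rw [coeff_mul, ← sum_pair (f := fun p : ℕ × ℕ ↦ coeff p.1 f * coeff p.2 g)
    (show ((0, 2 * k + 1) : ℕ × ℕ) ≠ (2 * k + 1, 0) by simp)]
  refine (sum_subset (by simp [insert_subset_iff]) fun ⟨i, j⟩ hij hne ↦ ?_).symm
  rw [HasAntidiagonal.mem_antidiagonal] at hij
  simp only [mem_insert, mem_singleton, Prod.mk.injEq, not_or, not_and] at hne
  rcases Nat.even_or_odd' i with ⟨t, rfl | rfl⟩
  · obtain ⟨s, rfl⟩ : ∃ s, j = 2 * s + 1 := ⟨k - t, by omega⟩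
    rw [hg s (by omega), mul_zero]
  · rw [hf t (by omega), zero_mul]

end CommSemiring

theorem coeff_wronskian_rescale_neg_one {R : Type*} [CommRing R] {f : R⟦X⟧} {k : ℕ}
    (hf : ∀ t < k, coeff (2 * t + 1) f = 0) :
    coeff (2 * k) (f * d⁄dX R (rescale (-1) f) - d⁄dX R f * rescale (-1) f) =
      -(2 * (2 * k + 1) * coeff 0 f * coeff (2 * k + 1) f) := by
  have hg : ∀ t < k, coeff (2 * t + 1) (rescale (-1) f) = 0 := fun t ht ↦ by
    rw [coeff_rescale, hf t ht, mul_zero]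
  have hθ {h : R⟦X⟧} (hh : ∀ t < k, coeff (2 * t + 1) h = 0) :
      ∀ t < k, coeff (2 * t + 1) (X * d⁄dX R h) = 0 := fun t ht ↦ by
    rw [coeff_X_mul_derivative, hh t ht, mul_zero]
  -- After multiplying by `X`, each product has factors `f`, `X f'` (or their reflections),
  -- all of whose odd coefficients below `2k+1` vanish.
  rw [← coeff_succ_X_mul, mul_sub, ← mul_assoc, mul_comm X f, mul_assoc, ← mul_assoc X,
    map_sub, coeff_odd_mul_of_coeff_odd_eq_zero hf (hθ hg),
    coeff_odd_mul_of_coeff_odd_eq_zero (hθ hf) hg]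
  simp only [coeff_X_mul_derivative, coeff_rescale, pow_succ, pow_mul]
  push_cast
  ring

theorem coeff_odd_eq_zero_of_ode {K : Type*} [Field K] [CharZero K] {f : K⟦X⟧} {k : ℕ}
    (hf : X * d⁄dX K (d⁄dX K f) = C (2 * k : K) * d⁄dX K f + X * f) {t : ℕ} (ht : t < k) :
    coeff (2 * t + 1) f = 0 := by
  induction t with
  | zero =>
    have h0 := congrArg (coeff 0) hf
    simp only [coeff_zero_X_mul, map_add, coeff_C_mul, coeff_derivative, add_zero] at h0
    have hk : (2 * k : K) ≠ 0 := mul_ne_zero two_ne_zero (Nat.cast_ne_zero.2 (by omega))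
    simpa [hk] using h0.symm
  | succ t ih =>
    obtain ⟨r, rfl⟩ : ∃ r, k = t + r + 2 := ⟨k - t - 2, by omega⟩
    have h := congrArg (coeff (2 * t + 1 + 1)) hf
    simp only [coeff_succ_X_mul, map_add, coeff_C_mul, coeff_derivative, ih (by omega)] at h
    have hprod : ((2 * t + 3) * (2 * r + 2) : ℕ) * coeff (2 * (t + 1) + 1) f = 0 := by
      push_cast at h ⊢
      linear_combination -h
    exact (mul_eq_zero.1 hprod).resolve_left (Nat.cast_ne_zero.2 (by positivity))

end PowerSeries

theorem Polynomial.coe_comp_C_mul_X {R : Type*} [CommSemiring R] (p : R[X]) (a : R) :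
    ((p.comp (C a * X) : R[X]) : R⟦X⟧) = PowerSeries.rescale a (p : R⟦X⟧) := by
  ext n
  rw [Polynomial.coeff_coe, PowerSeries.coeff_rescale, Polynomial.coeff_coe,
    Polynomial.comp_C_mul_X_coeff, mul_comm]

theorem Polynomial.coeff_wronskian_eq_zero_of_natDegree_add_le {R : Type*} [CommRing R]
    {a b : R[X]} {m : ℕ} (h : a.natDegree + b.natDegree ≤ m) : (wronskian a b).coeff m = 0 := by
  by_cases hw : wronskian a b = 0
  · rw [hw, Polynomial.coeff_zero]
  · exact Polynomial.coeff_eq_zero_of_natDegree_lt ((natDegree_wronskian_lt_add hw).trans_le h)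

theorem eq_zero_of_sum_mul_triangular {R : Type*} [Semiring R] [NoZeroDivisors R] {N J : ℕ}
    (hJN : J ≤ N) (β : ℕ → R) (c : ℕ → ℕ → R) (hc : ∀ j k, j < k → c k j = 0)
    (hdiag : ∀ j, c j j ≠ 0) (hsum : ∀ j < J, ∑ k ∈ range N, β k * c k j = 0) :
    ∀ j < J, β j = 0 := by
  intro j
  induction j using Nat.strong_induction_on with
  | _ j ih =>
    intro hj
    have hj' := hsum j hj
    rw [sum_eq_single_of_mem j (mem_range.2 (by omega)) fun k _ hkj ↦ ?_] at hj'
    · exact (mul_eq_zero.1 hj').resolve_right (hdiag j)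
    · rcases lt_or_gt_of_ne hkj with h | h
      · rw [ih k h (by omega), zero_mul]
      · rw [hc j k h, mul_zero]

noncomputable def besselCoeff (n i : ℕ) : ℝ :=
  ((n.factorial : ℝ) * (2 * n - i).factorial * 2 ^ i) /
    ((2 * n).factorial * (n - i).factorial * i.factorial)

theorem besselCoeff_ne_zero (n i : ℕ) : besselCoeff n i ≠ 0 := by
  unfold besselCoeff
  positivity

theorem besselCoeff_succ {n j : ℕ} (h : j < n) :
    (j + 1) * (2 * n - j) * besselCoeff n (j + 1) = 2 * (n - j) * besselCoeff n j := by
  obtain ⟨r, rfl⟩ : ∃ r, n = j + r + 1 := ⟨n - j - 1, by omega⟩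
  unfold besselCoeff
  rw [show 2 * (j + r + 1) - (j + 1) = j + 2 * r + 1 by omega,
    show 2 * (j + r + 1) - j = j + 2 * r + 1 + 1 by omega,
    show j + r + 1 - (j + 1) = r by omega, show j + r + 1 - j = r + 1 by omega,
    Nat.factorial_succ (j + 2 * r + 1), Nat.factorial_succ r, Nat.factorial_succ j]
  push_cast
  field_simp
  ring

noncomputable def besselPoly (n : ℕ) : ℝ[X] :=
  ∑ i ∈ range (n + 1), Polynomial.monomial i (besselCoeff n i)

theorem coeff_besselPoly (n i : ℕ) :
    (besselPoly n).coeff i = if i ≤ n then besselCoeff n i else 0 := by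
  simp [besselPoly, Polynomial.coeff_monomial]

theorem eval_besselPoly (n : ℕ) (u : ℝ) : (besselPoly n).eval u = besselQ n u := by
  simp [besselPoly, besselQ, besselCoeff, Polynomial.eval_finsetSum]

theorem natDegree_besselPoly_le (n : ℕ) : (besselPoly n).natDegree ≤ n :=
  Polynomial.natDegree_le_iff_coeff_eq_zero.2 fun i hi ↦ by
    rw [coeff_besselPoly, if_neg (by exact_mod_cast hi.not_ge)]

open PowerSeries

theorem besselPoly_ode (n : ℕ) :
    X * d⁄dX ℝ (d⁄dX ℝ (besselPoly n : ℝ⟦X⟧)) + C (2 * n : ℝ) * (besselPoly n : ℝ⟦X⟧) =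
      C (2 * n : ℝ) * d⁄dX ℝ (besselPoly n : ℝ⟦X⟧) +
        2 * (X * d⁄dX ℝ (besselPoly n : ℝ⟦X⟧)) := by
  rw [← map_ofNat C 2]
  ext j
  simp only [map_add, coeff_C_mul, coeff_X_mul_derivative, coeff_derivative,
    Polynomial.coeff_coe, coeff_besselPoly]
  rcases lt_trichotomy j n with h | rfl | h
  · rw [if_pos (show j + 1 ≤ n from h), if_pos h.le]
    linear_combination -besselCoeff_succ h
  · rw [if_neg (by omega), if_pos le_rfl]
    ring
  · rw [if_neg (by omega), if_neg (by omega)]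
    ring

noncomputable def besselExpSeries (n : ℕ) : ℝ⟦X⟧ :=
  (besselPoly n : ℝ⟦X⟧) * rescale (-1) (exp ℝ)

theorem derivative_rescale_neg_one_exp :
    d⁄dX ℝ (rescale (-1) (exp ℝ)) = -rescale (-1) (exp ℝ) := by
  rw [derivative_rescale, derivative_exp, map_neg, map_one, neg_one_mul]

theorem besselExpSeries_ode (n : ℕ) :
    X * d⁄dX ℝ (d⁄dX ℝ (besselExpSeries n)) =
      C (2 * n : ℝ) * d⁄dX ℝ (besselExpSeries n) + X * besselExpSeries n := by
  simp only [besselExpSeries, Derivation.leibniz, smul_eq_mul, map_add,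
    derivative_rescale_neg_one_exp, map_neg]
  linear_combination rescale (-1) (exp ℝ) * besselPoly_ode n

theorem coeff_besselExpSeries_odd {n t : ℕ} (h : t < n) :
    coeff (2 * t + 1) (besselExpSeries n) = 0 :=
  coeff_odd_eq_zero_of_ode (besselExpSeries_ode n) h

theorem coeff_rescale_besselExpSeries_odd (c : ℝ) {n t : ℕ} (h : t < n) :
    coeff (2 * t + 1) (rescale c (besselExpSeries n)) = 0 := by
  rw [coeff_rescale, coeff_besselExpSeries_odd h, mul_zero]

theorem coeff_besselExpSeries_ne_zero (n : ℕ) : coeff (2 * n + 1) (besselExpSeries n) ≠ 0 := by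
  have hq : (besselPoly n).natDegree ≤ n := natDegree_besselPoly_le n
  obtain ⟨z, hz, hzn, hzn_coeff⟩ : ∃ z : ℝ[X],
      rescale (-1) (besselExpSeries n) = (z : ℝ⟦X⟧) * exp ℝ ∧ z.natDegree ≤ n ∧
        z.coeff n = besselCoeff n n * (-1) ^ n := by
    refine ⟨(besselPoly n).comp (Polynomial.C (-1) * Polynomial.X), ?_,
      Polynomial.natDegree_comp_le.trans (by simpa using hq), ?_⟩
    · rw [besselExpSeries, map_mul, rescale_rescale, Polynomial.coe_comp_C_mul_X]
      norm_num [rescale_one]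
    · rw [Polynomial.comp_C_mul_X_coeff, coeff_besselPoly, if_pos le_rfl]
  have hexp : rescale (-1) (exp ℝ) * exp ℝ = 1 := by
    rw [mul_comm]
    exact exp_mul_exp_neg_eq_one
  have hW : besselExpSeries n * d⁄dX ℝ (rescale (-1) (besselExpSeries n)) -
      d⁄dX ℝ (besselExpSeries n) * rescale (-1) (besselExpSeries n) =
        (Polynomial.wronskian (besselPoly n) z : ℝ⟦X⟧) +
          C 2 * ((besselPoly n * z : ℝ[X]) : ℝ⟦X⟧) := by
    rw [hz]
    simp only [besselExpSeries, Polynomial.wronskian, Derivation.leibniz, smul_eq_mul,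
      derivative_exp, derivative_rescale_neg_one_exp, derivative_coe, Polynomial.coe_sub,
      Polynomial.coe_mul, map_ofNat]
    linear_combination ((besselPoly n : ℝ⟦X⟧) * (Polynomial.derivative z : ℝ⟦X⟧) -
      (Polynomial.derivative (besselPoly n) : ℝ⟦X⟧) * z + 2 * (besselPoly n : ℝ⟦X⟧) * z) *
        hexp
  have h := coeff_wronskian_rescale_neg_one fun t (ht : t < n) ↦ coeff_besselExpSeries_odd ht
  rw [hW, map_add, coeff_C_mul, Polynomial.coeff_coe, Polynomial.coeff_coe, two_mul n,
    Polynomial.coeff_wronskian_eq_zero_of_natDegree_add_le (add_le_add hq hzn),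
    Polynomial.coeff_mul_add_eq_of_natDegree_le hq hzn, hzn_coeff, coeff_besselPoly,
    if_pos le_rfl, ← two_mul] at h
  intro hσ
  rw [hσ, mul_zero, neg_zero] at h
  simp [besselCoeff_ne_zero] at h

theorem rescale_besselExpSeries_mul {n m N : ℕ} {a : ℝ} {β : ℕ → ℝ}
    (h : ∀ u, besselQ n (a * u) * besselQ m ((1 - a) * u) = ∑ k ∈ range N, β k * besselQ k u) :
    rescale a (besselExpSeries n) * rescale (1 - a) (besselExpSeries m) =
      ∑ k ∈ range N, C (β k) * besselExpSeries k := by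
  have hpoly : (besselPoly n).comp (Polynomial.C a * Polynomial.X) *
      (besselPoly m).comp (Polynomial.C (1 - a) * Polynomial.X) =
        ∑ k ∈ range N, Polynomial.C (β k) * besselPoly k :=
    Polynomial.funext fun u ↦ by
      simp [Polynomial.eval_finsetSum, eval_besselPoly, h]
  have hexp : rescale a (exp ℝ) * rescale (1 - a) (exp ℝ) = exp ℝ := by
    rw [exp_mul_exp_eq_exp_add, add_sub_cancel, rescale_one, RingHom.id_apply]
  have hcoe := congrArg Polynomial.coeToPowerSeries.ringHom hpoly
  simp only [map_mul, map_sum, Polynomial.coeToPowerSeries.ringHom_apply, Polynomial.coe_C,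
    Polynomial.coe_comp_C_mul_X] at hcoe
  calc rescale a (besselExpSeries n) * rescale (1 - a) (besselExpSeries m)
      = rescale a (besselPoly n : ℝ⟦X⟧) * rescale (1 - a) (besselPoly m : ℝ⟦X⟧) *
          rescale (-1) (rescale a (exp ℝ) * rescale (1 - a) (exp ℝ)) := by
        simp only [besselExpSeries, map_mul, rescale_rescale, mul_comm (-1 : ℝ)]
        ring
    _ = ∑ k ∈ range N, C (β k) * besselExpSeries k := by
        rw [hexp, hcoe, sum_mul]
        simp only [besselExpSeries, mul_assoc]

theorem coeff_rescale_mul_rescale_besselExpSeries_odd (a b : ℝ) {n m j : ℕ} (hn : j < n)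
    (hm : j < m) :
    coeff (2 * j + 1) (rescale a (besselExpSeries n) * rescale b (besselExpSeries m)) = 0 := by
  rw [coeff_odd_mul_of_coeff_odd_eq_zero
    (fun t ht ↦ coeff_rescale_besselExpSeries_odd a (ht.trans hn))
    (fun t ht ↦ coeff_rescale_besselExpSeries_odd b (ht.trans hm)),
    coeff_rescale_besselExpSeries_odd a hn, coeff_rescale_besselExpSeries_odd b hm,
    mul_zero, zero_mul, add_zero]

/-- Vanishing of the linearization coefficients with `a₁ = a`, `a₂ = 1−a`:
`β_k^{(n,m)}(a, 1−a) = 0` for `k < min(n, m)`. -/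
theorem linearization_vanishing (a : ℝ) (β : ℕ → ℕ → ℕ → ℝ)
    (hβ : ∀ n m : ℕ, ∀ u : ℝ, besselQ n (a * u) * besselQ m ((1 - a) * u) =
      ∑ k ∈ Finset.range (n + m + 1), β n m k * besselQ k u)
    (n m k : ℕ) (hk : k < min n m) :
    β n m k = 0 := by
  refine eq_zero_of_sum_mul_triangular (N := n + m + 1) (by omega) (β n m)
    (fun k j ↦ coeff (2 * j + 1) (besselExpSeries k)) (fun _ _ ↦ coeff_besselExpSeries_odd)
    coeff_besselExpSeries_ne_zero (fun j hj ↦ ?_) k hk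
  have h := congrArg (coeff (2 * j + 1)) (rescale_besselExpSeries_mul (hβ n m))
  rw [coeff_rescale_mul_rescale_besselExpSeries_odd a (1 - a) (lt_min_iff.1 hj).1
    (lt_min_iff.1 hj).2, map_sum] at h
  simpa only [coeff_C_mul] using h.symm
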